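/- arXiv:1707.09546 — 8 statements merged into one kernel-verified Lean document; each statement's English description precedes it below -/
import Mathlib

section
/- Let A be an uncountable abelian group and ℵ a cardinal with ℵ₀ ≤ ℵ < |A|. Then A has a subgroup B such that the quotient group A/B has cardinality exactly ℵ. -/
/-!
Pick `S ⊆ A` with `|S| = ℵ`. The subgroup generated by `S`, a quotient `ℤ^(S) ⧸ K`, embeds in
`ℚ^(S) ⧸ K`, a divisible group of cardinality `ℵ`. Divisible groups are injective `ℤ`-modules, so
this embedding extends to a homomorphism `f : A → D`; then `S` injects into `A ⧸ ker f`, which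
injects into `D`, so `|A ⧸ ker f| = ℵ`.
-/

open Cardinal

theorem Module.Baer.int_of_quotient_of_module_rat {M : Type*} [AddCommGroup M] [Module ℚ M]
    (N : AddSubgroup M) : Module.Baer ℤ (M ⧸ N) := by
  let _ : DivisibleBy (M ⧸ N) ℤ := divisibleByOfSMulRightSurj _ _ fun {n} hn y => by
    obtain ⟨x, rfl⟩ := QuotientAddGroup.mk_surjective y
    refine ⟨((n : ℚ)⁻¹ • x : M), ?_⟩
    change n • _ = _
    rw [← QuotientAddGroup.mk_zsmul, ← Int.cast_smul_eq_zsmul ℚ, smul_smul,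
      mul_inv_cancel₀ (Int.cast_ne_zero.mpr hn), one_smul]
  exact Module.Baer.of_divisible _

theorem QuotientAddGroup.map_map_injective {M N : Type*} [AddGroup M] [AddGroup N]
    (K : AddSubgroup M) [K.Normal] {j : M →+ N} [(K.map j).Normal] (hj : Function.Injective j) :
    Function.Injective (QuotientAddGroup.map K (K.map j) j (AddSubgroup.le_comap_map j K)) := by
  refine (injective_iff_map_eq_zero _).mpr fun x hx => ?_
  obtain ⟨x, rfl⟩ := QuotientAddGroup.mk_surjective x
  rw [QuotientAddGroup.map_mk, QuotientAddGroup.eq_zero_iff,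
    AddSubgroup.mem_map_iff_mem hj] at hx
  exact (QuotientAddGroup.eq_zero_iff x).mpr hx

theorem exists_injective_addMonoidHom_baer_of_quotient_finsupp (ι : Type u) [Infinite ι]
    (K : AddSubgroup (ι →₀ ℤ)) :
    ∃ (D : Type u) (_ : AddCommGroup D), Module.Baer ℤ D ∧ #D ≤ #ι ∧
      ∃ g : (ι →₀ ℤ) ⧸ K →+ D, Function.Injective g := by
  let j : (ι →₀ ℤ) →+ (ι →₀ ℚ) := Finsupp.mapRange.addMonoidHom (Int.castAddHom ℚ)
  have hj : Function.Injective j :=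
    Finsupp.mapRange_injective _ Int.cast_zero Int.cast_injective
  refine ⟨(ι →₀ ℚ) ⧸ K.map j, inferInstance,
    Module.Baer.int_of_quotient_of_module_rat _, ?_, _, QuotientAddGroup.map_map_injective K hj⟩
  calc #((ι →₀ ℚ) ⧸ K.map j) ≤ #(ι →₀ ℚ) := mk_le_of_surjective QuotientAddGroup.mk_surjective
    _ = #ι := by simp

section

variable {A : Type u} [AddCommGroup A]

theorem exists_addMonoidHom_injOn_of_infinite (S : Set A) [Infinite S] :
    ∃ (D : Type u) (_ : AddCommGroup D) (f : A →+ D), #D ≤ #S ∧ S.InjOn f := by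
  let π : (S →₀ ℤ) →+ A := (Finsupp.linearCombination ℤ ((↑) : S → A)).toAddMonoidHom
  obtain ⟨D, _, hD, hDS, g, hg⟩ :=
    exists_injective_addMonoidHom_baer_of_quotient_finsupp S π.ker
  obtain ⟨f, hf⟩ := hD.extension_property_addMonoidHom _ (QuotientAddGroup.kerLift_injective π) g
  refine ⟨D, _, f, hDS, ?_⟩
  have hS : S ⊆ Set.range (QuotientAddGroup.kerLift π) := fun s hs =>
    ⟨QuotientAddGroup.mk (Finsupp.single ⟨s, hs⟩ 1), by simp [π]⟩
  have hfi : Function.Injective (f ∘ QuotientAddGroup.kerLift π) := by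
    rwa [← AddMonoidHom.coe_comp, hf]
  exact hfi.injOn_range.mono hS

theorem exists_addSubgroup_mk_quotient_eq (S : Set A) [Infinite S] :
    ∃ B : AddSubgroup A, #(A ⧸ B) = #S := by
  obtain ⟨D, _, f, hDS, hf⟩ := exists_addMonoidHom_injOn_of_infinite S
  refine ⟨f.ker, le_antisymm ?_ ?_⟩
  · exact (mk_le_of_injective (QuotientAddGroup.kerLift_injective f)).trans hDS
  · refine mk_le_of_injective (f := fun s : S => ((s : A) : A ⧸ f.ker)) fun s t hst => ?_
    exact Subtype.ext (hf s.2 t.2 (by simpa using congrArg (QuotientAddGroup.kerLift f) hst))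

end

theorem stmt_4_general {A : Type u} [AddCommGroup A]
    (κ : Cardinal.{u}) (h1 : Cardinal.aleph0 ≤ κ) (h2 : κ < Cardinal.mk A) :
    ∃ B : AddSubgroup A, Cardinal.mk (A ⧸ B) = κ := by
  obtain ⟨S, hS⟩ := le_mk_iff_exists_set.mp h2.le
  have : Infinite S := infinite_iff.mpr (hS ▸ h1)
  obtain ⟨B, hB⟩ := exists_addSubgroup_mk_quotient_eq S
  exact ⟨B, hB.trans hS⟩

/-- Let `A` be an uncountable abelian group and `ℵ` a cardinal with `ℵ₀ ≤ ℵ < |A|`.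
Then `A` has a subgroup `B` such that `A ⧸ B` has cardinality exactly `ℵ`. -/
theorem stmt_4 {A : Type u} [AddCommGroup A] (hA : ¬ Countable A)
    (κ : Cardinal.{u}) (h1 : Cardinal.aleph0 ≤ κ) (h2 : κ < Cardinal.mk A) :
    ∃ B : AddSubgroup A, Cardinal.mk (A ⧸ B) = κ :=
  stmt_4_general κ h1 h2
end

section
/- If G is an infinite compact Hausdorff totally disconnected topological group, embedded as a closed subgroup of a product ∏_{i∈I} F_i of finite discrete groups with each projection p_i surjective onto F_i, then there exists a countable subset J ⊆ I such that the image of G under the projection to ∏_{j∈J} F_j is infinite. -/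
open Function

-- One separating coordinate for each pair of distinct points suffices.
theorem exists_countable_domRestrict_injective {ι α : Type*} [Countable α] {β : ι → Type*}
    {x : α → ∀ i, β i} (hx : Injective x) :
    ∃ J : Set ι, J.Countable ∧ Injective fun a => J.domRestrict (x a) := by
  have hsep : ∀ p : {p : α × α // p.1 ≠ p.2}, ∃ i, x p.1.1 i ≠ x p.1.2 i := fun p =>
    ne_iff.mp (hx.ne p.2)
  choose sep hsep using hsep
  refine ⟨Set.range sep, Set.countable_range sep, fun a b hab => ?_⟩
  by_contra hne
  exact hsep ⟨(a, b), hne⟩ (congrFun hab ⟨_, Set.mem_range_self _⟩)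

theorem stmt_6_general {G : Type*} [Group G] [TopologicalSpace G] [Infinite G]
    {I : Type*} (F : I → Type*) [∀ i, Group (F i)]
    [∀ i, TopologicalSpace (F i)]
    (e : G →* (∀ i, F i)) (he : Topology.IsClosedEmbedding e) :
    ∃ J : Set I, J.Countable ∧
      (Set.range fun g : G => fun j : J => e g (j : I)).Infinite := by
  obtain ⟨f, hf⟩ := Infinite.natEmbedding G
  obtain ⟨J, hJ, hinj⟩ := exists_countable_domRestrict_injective (he.injective.comp hf)
  exact ⟨J, hJ, Set.infinite_of_injective_forall_mem hinj fun n => ⟨f n, rfl⟩⟩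

/-- If an infinite compact totally disconnected Hausdorff topological group `G` is embedded
as a closed subgroup of a product `∏ i, F i` of finite discrete groups with each coordinate
projection surjective, then there is a countable `J ⊆ I` such that the image of `G` under
the projection to `∏ j : J, F j` is infinite. -/
theorem stmt_6 {G : Type*} [Group G] [TopologicalSpace G] [IsTopologicalGroup G]
    [CompactSpace G] [T2Space G] [TotallyDisconnectedSpace G] [Infinite G]
    {I : Type*} (F : I → Type*) [∀ i, Group (F i)] [∀ i, Finite (F i)]
    [∀ i, TopologicalSpace (F i)] [∀ i, DiscreteTopology (F i)]
    (e : G →* (∀ i, F i)) (he : Topology.IsClosedEmbedding e)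
    (hsurj : ∀ i, Function.Surjective fun g => e g i) :
    ∃ J : Set I, J.Countable ∧
      (Set.range fun g : G => fun j : J => e g (j : I)).Infinite :=
  stmt_6_general F e he
end

section
/- Separability is a three-space property for topological groups: if G is a topological group with a closed normal subgroup N such that both N and the quotient group G/N are separable, then G is separable. -/
/-!
Lift a countable dense subset of `G ⧸ N` to a countable `E ⊆ G`. Then `E * N` is the preimage of
that dense set under the open quotient map, hence dense in `G`, and it is separable as the image of
the separable set `E ×ˢ N` under multiplication.
-/

open Set TopologicalSpace Pointwise

theorem TopologicalSpace.IsSeparable.mul {M : Type*} [Mul M] [TopologicalSpace M] [ContinuousMul M]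
    {s t : Set M} (hs : IsSeparable s) (ht : IsSeparable t) : IsSeparable (s * t) := by
  rw [← image_mul_prod]
  exact (hs.prod ht).image continuous_mul

theorem Subgroup.separableSpace_of_separableSpace_quotient {G : Type*} [Group G]
    [TopologicalSpace G] [ContinuousMul G] (N : Subgroup G) [SeparableSpace N]
    [SeparableSpace (G ⧸ N)] : SeparableSpace G := by
  obtain ⟨t, htc, htd⟩ := exists_countable_dense (G ⧸ N)
  have hlift : ((↑) : G → G ⧸ N) '' (Quotient.out '' t) = t := by
    rw [image_image]
    exact image_congr (fun q _ ↦ QuotientGroup.out_eq' q) |>.trans (image_id t)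
  have hdense : Dense (Quotient.out '' t * (N : Set G)) := by
    rw [← QuotientGroup.preimage_image_mk_eq_mul, hlift]
    exact htd.preimage QuotientGroup.isOpenMap_coe
  exact hdense.isSeparable_iff.1 ((htc.image _).isSeparable.mul (.of_subtype _))

theorem stmt_7_general {G : Type*} [Group G] [TopologicalSpace G] [IsTopologicalGroup G]
    (N : Subgroup G)
    (hN : TopologicalSpace.SeparableSpace N)
    (hQ : TopologicalSpace.SeparableSpace (G ⧸ N)) :
    TopologicalSpace.SeparableSpace G :=
  N.separableSpace_of_separableSpace_quotient

/-- Separability is a three-space property for topological groups: if `N` is a closed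
normal subgroup of a topological group `G` such that both `N` and `G ⧸ N` are separable,
then `G` is separable. -/
theorem stmt_7 {G : Type*} [Group G] [TopologicalSpace G] [IsTopologicalGroup G]
    (N : Subgroup G) [N.Normal] (hclosed : IsClosed (N : Set G))
    (hN : TopologicalSpace.SeparableSpace N)
    (hQ : TopologicalSpace.SeparableSpace (G ⧸ N)) :
    TopologicalSpace.SeparableSpace G :=
  stmt_7_general N hN hQ
end

section
/- Every continuous character χ : T^A → T on a power of the circle group depends on only finitely many coordinates: there exist pairwise distinct indices α₁, …, α_k ∈ A and integers n₁, …, n_k such that χ(x) = ∏_{i=1}^k x(α_i)^{n_i} for every x ∈ T^A. -/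
/-!
Continuity at `1` gives finitely many coordinates `I` such that `χ x` has real part `> 1/2`
whenever every `x a`, `a ∈ I`, is close to `1`. Since `{Re > 1/2}` contains no nontrivial
subgroup of the circle (for `w ≠ 1` the averages of `1, w, …, w ^ (N - 1)` tend to `0`), `χ` kills
every `x` that is trivial on `I`, so `χ` is the product of its restrictions to the coordinate
circles `a ∈ I`. Each of these is a continuous character of the circle, hence `z ↦ z ^ n`: the
translation invariance of Haar measure gives `φ · ĉ(n) = eₙ · ĉ(n)` for every Fourier coefficient
`ĉ(n)` of the character `φ`, and Parseval supplies an `n` with `ĉ(n) ≠ 0`.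
-/

open Complex MeasureTheory AddCircle

theorem Circle.eq_one_of_forall_half_lt_re_pow (w : Circle)
    (h : ∀ n : ℕ, 1 / 2 < ((w ^ n : Circle) : ℂ).re) : w = 1 := by
  by_contra hw
  have hw' : (w : ℂ) ≠ 1 := fun h1 => hw (Circle.coe_injective h1)
  have hpos : 0 < ‖(w : ℂ) - 1‖ := norm_pos_iff.mpr (sub_ne_zero.mpr hw')
  obtain ⟨N, hN⟩ := exists_nat_gt (4 / ‖(w : ℂ) - 1‖)
  have lower : (N : ℝ) / 2 ≤ (∑ k ∈ Finset.range N, (w : ℂ) ^ k).re := by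
    rw [re_sum]
    calc (N : ℝ) / 2 = ∑ _k ∈ Finset.range N, (1 / 2 : ℝ) := by simp; ring
      _ ≤ _ := Finset.sum_le_sum fun k _ => (h k).le
  have upper : ‖∑ k ∈ Finset.range N, (w : ℂ) ^ k‖ ≤ 2 / ‖(w : ℂ) - 1‖ := by
    rw [geom_sum_eq hw', norm_div]
    gcongr
    calc ‖(w : ℂ) ^ N - 1‖ ≤ ‖(w : ℂ) ^ N‖ + ‖(1 : ℂ)‖ := norm_sub_le _ _
      _ = 2 := by rw [norm_pow, Circle.norm_coe, one_pow, norm_one]; norm_num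
  rw [div_lt_iff₀ hpos] at hN
  rw [le_div_iff₀ hpos] at upper
  nlinarith [re_le_norm (∑ k ∈ Finset.range N, (w : ℂ) ^ k)]

section Fourier

variable {T : ℝ} [Fact (0 < T)]

theorem fourierCoeff_comp_add_right {E : Type*} [NormedAddCommGroup E] [NormedSpace ℂ E]
    [CompleteSpace E] (f : AddCircle T → E) (t : AddCircle T) (n : ℤ) :
    fourierCoeff (fun x => f (x + t)) n = fourier n t • fourierCoeff f n := by
  have hshift : ∀ x, fourier (-n) (x - t) = fourier n t * fourier (-n) x := by
    intro x
    rw [fourier_apply, fourier_apply, fourier_apply, smul_sub, neg_smul, neg_smul, sub_neg_eq_add,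
      add_comm, toCircle_add, Circle.coe_mul]
  calc fourierCoeff (fun x => f (x + t)) n
      = ∫ x, fourier (-n) (x + t - t) • f (x + t) ∂haarAddCircle := by
        simp only [add_sub_cancel_right]; rfl
    _ = ∫ x, fourier (-n) (x - t) • f x ∂haarAddCircle :=
        integral_add_right_eq_self (fun x => fourier (-n) (x - t) • f x) t
    _ = fourier n t • fourierCoeff f n := by
        simp only [hshift, mul_smul]
        exact integral_smul _ _

theorem exists_fourierCoeff_ne_zero_of_norm_eq_one (f : C(AddCircle T, ℂ))
    (hf : ∀ x, ‖f x‖ = 1) : ∃ n, fourierCoeff f n ≠ 0 := by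
  by_contra! h
  have parseval := tsum_sq_fourierCoeff (ContinuousMap.toLp (E := ℂ) 2 haarAddCircle ℂ f)
  have hnorm : ∫ t, ‖(ContinuousMap.toLp (E := ℂ) 2 haarAddCircle ℂ f :
      AddCircle T → ℂ) t‖ ^ 2 ∂haarAddCircle = 1 := by
    rw [integral_congr_ae (g := fun _ => (1 : ℝ))]
    · simp
    · filter_upwards [ContinuousMap.coeFn_toLp (p := 2) (μ := haarAddCircle) (𝕜 := ℂ) f]
        with t ht
      rw [ht, hf, one_pow]
  simp only [hnorm, fourierCoeff_toLp, h, norm_zero] at parseval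
  norm_num at parseval

theorem exists_eq_fourier_of_map_add (f : C(AddCircle T, ℂ))
    (hadd : ∀ x y, f (x + y) = f x * f y) (hf : ∀ x, ‖f x‖ = 1) :
    ∃ n : ℤ, ∀ x, f x = fourier n x := by
  obtain ⟨n, hn⟩ := exists_fourierCoeff_ne_zero_of_norm_eq_one f hf
  refine ⟨n, fun t => mul_right_cancel₀ hn ?_⟩
  have htrans := fourierCoeff_comp_add_right f t n
  simp only [add_comm _ t, hadd, smul_eq_mul] at htrans
  rwa [fourierCoeff.const_mul] at htrans

end Fourier

theorem Circle.exists_eq_zpow_of_continuous (φ : Circle →* Circle) (hφ : Continuous φ) :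
    ∃ n : ℤ, ∀ z, φ z = z ^ n := by
  let f : C(UnitAddCircle, ℂ) := ⟨fun x => φ (toCircle x), by fun_prop⟩
  obtain ⟨n, hn⟩ := exists_eq_fourier_of_map_add f
    (fun x y => by simp [f, toCircle_add]) (fun x => by simp [f, Circle.norm_coe])
  refine ⟨n, fun z => ?_⟩
  obtain ⟨x, rfl⟩ := (homeomorphCircle one_ne_zero).surjective z
  apply Circle.coe_injective
  simpa [f, homeomorphCircle_apply, fourier_apply, toCircle_zsmul] using hn x

theorem Circle.exists_finset_map_eq_one_of_continuous_pi {A : Type*} {G : A → Type*}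
    [∀ a, TopologicalSpace (G a)] [∀ a, Monoid (G a)] (χ : (∀ a, G a) →* Circle)
    (hχ : Continuous χ) : ∃ I : Finset A, ∀ x, (∀ a ∈ I, x a = 1) → χ x = 1 := by
  have hV : IsOpen (χ ⁻¹' {z : Circle | 1 / 2 < (z : ℂ).re}) :=
    (isOpen_lt continuous_const (continuous_re.comp continuous_subtype_val)).preimage hχ
  obtain ⟨I, u, hu, hsub⟩ := isOpen_pi_iff.mp hV 1 (by norm_num)
  refine ⟨I, fun x hx => Circle.eq_one_of_forall_half_lt_re_pow _ fun n => ?_⟩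
  rw [← map_pow]
  refine hsub fun a ha => ?_
  simpa [hx a ha] using (hu a ha).2

theorem MonoidHom.map_eq_prod_map_mulSingle {A : Type*} [DecidableEq A] {G : A → Type*}
    [∀ a, CommGroup (G a)] {M : Type*} [CommMonoid M] (χ : (∀ a, G a) →* M) (I : Finset A)
    (hI : ∀ x, (∀ a ∈ I, x a = 1) → χ x = 1) (x : ∀ a, G a) :
    χ x = ∏ a ∈ I, χ (Pi.mulSingle a (x a)) := by
  set y := ∏ a ∈ I, Pi.mulSingle a (x a)
  have hxy : ∀ a ∈ I, (x * y⁻¹) a = 1 := fun a ha => by simp [y, Finset.prod_apply, ha]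
  calc χ x = χ (x * y⁻¹) * χ y := by rw [← map_mul, inv_mul_cancel_right]
    _ = χ y := by rw [hI _ hxy, one_mul]
    _ = ∏ a ∈ I, χ (Pi.mulSingle a (x a)) := map_prod χ _ _

theorem Circle.exists_finset_eq_prod_zpow {A : Type*} (χ : (A → Circle) →* Circle)
    (hχ : Continuous χ) : ∃ (I : Finset A) (n : A → ℤ), ∀ x, χ x = ∏ a ∈ I, x a ^ n a := by
  classical
  obtain ⟨I, hI⟩ := exists_finset_map_eq_one_of_continuous_pi χ hχ
  choose n hn using fun a => exists_eq_zpow_of_continuous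
    (χ.comp (MonoidHom.mulSingle (fun _ => Circle) a))
    (hχ.comp (continuous_mulSingle (A := fun _ => Circle) a))
  exact ⟨I, n, fun x => (χ.map_eq_prod_map_mulSingle I hI x).trans
    (Finset.prod_congr rfl fun a _ => hn a (x a))⟩

theorem stmt_8_general {A : Type*} (χ : (A → Circle) →* Circle)
    (hχ : Continuous χ) :
    ∃ (k : ℕ) (α : Fin k → A) (n : Fin k → ℤ), Function.Injective α ∧
      ∀ x : A → Circle, χ x = ∏ i, x (α i) ^ n i := by
  obtain ⟨I, n, hχ⟩ := Circle.exists_finset_eq_prod_zpow χ hχ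
  refine ⟨I.card, fun i => I.equivFin.symm i, fun i => n (I.equivFin.symm i),
    Subtype.val_injective.comp I.equivFin.symm.injective, fun x => ?_⟩
  rw [hχ, ← I.prod_coe_sort]
  exact (I.equivFin.symm.prod_comp fun a => x a ^ n a).symm

/-- Every continuous character `χ : 𝕋^A → 𝕋` on a power of the circle group depends on
only finitely many coordinates: there exist pairwise distinct indices `α₁, …, α_k ∈ A` and
integers `n₁, …, n_k` such that `χ x = ∏ i, x (α i) ^ n i` for all `x`. -/
theorem stmt_8 {A : Type*} [Nonempty A] (χ : (A → Circle) →* Circle)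
    (hχ : Continuous χ) :
    ∃ (k : ℕ) (α : Fin k → A) (n : Fin k → ℤ), Function.Injective α ∧
      ∀ x : A → Circle, χ x = ∏ i, x (α i) ^ n i :=
  stmt_8_general χ hχ
end

section
/- Let H₁, …, H_n be abelian topological groups such that, for each i, every homomorphism from a countable subgroup of H_i to the circle group T extends to a continuous character of H_i. Then every homomorphism from a countable subgroup of the product H₁ × ⋯ × H_n to T extends to a continuous character of the product. -/
/-!
Extend `f` from the countable subgroup `S` of `∏ i, H i` to an abstract character `φ` of the whole
product, which is possible because the circle group is divisible, hence injective as a `ℤ`-module.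
The restriction of `φ` along the `i`-th coordinate embedding to the projection of `S` onto `H i` is
a character of a countable subgroup, so it extends to a continuous character `gᵢ` of `H i`. Since
every `s ∈ S` is the finite product of its coordinates, `x ↦ ∏ i, gᵢ (x i)` agrees with `φ`, hence
with `f`, on `S`.
-/

noncomputable instance Circle.instDivisibleByAdditiveInt : DivisibleBy (Additive Circle) ℤ :=
  Function.Surjective.divisibleBy Circle.expHom (fun z => Circle.exp_surjective z.toMul)
    (fun a n => map_zsmul Circle.expHom n a)

theorem Circle.exists_monoidHom_comp_eq {A B : Type*} [CommGroup A] [CommGroup B] {i : A →* B}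
    (hi : Function.Injective i) (f : A →* Circle) : ∃ F : B →* Circle, F.comp i = f := by
  obtain ⟨F, hF⟩ := (Module.Baer.of_divisible (Additive Circle)).extension_property_addMonoidHom
    (MonoidHom.toAdditive i) hi (MonoidHom.toAdditive f)
  exact ⟨MonoidHom.toAdditive.symm F, MonoidHom.toAdditive.injective hF⟩

def Subgroup.IsHEmbedded {G : Type*} [Group G] [TopologicalSpace G] (S : Subgroup G) : Prop :=
  ∀ f : S →* Circle, ∃ g : G →* Circle, Continuous g ∧ ∀ s : S, g s = f s

theorem Subgroup.isHEmbedded_of_forall_map_eval {ι : Type*} [Fintype ι] {H : ι → Type*}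
    [∀ i, CommGroup (H i)] [∀ i, TopologicalSpace (H i)] (S : Subgroup (∀ i, H i))
    (hS : ∀ i, (S.map (Pi.evalMonoidHom H i)).IsHEmbedded) : S.IsHEmbedded := by
  classical
  intro f
  obtain ⟨φ, hφ⟩ := Circle.exists_monoidHom_comp_eq S.subtype_injective f
  choose g hg_cont hg using fun i =>
    hS i (φ.comp ((MonoidHom.mulSingle H i).comp (S.map (Pi.evalMonoidHom H i)).subtype))
  refine ⟨∏ i, (g i).comp (Pi.evalMonoidHom H i), ?_, fun s => ?_⟩
  · simp only [MonoidHom.coe_finsetProd, Finset.prod_fn]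
    exact continuous_finsetProd _ fun i _ => (hg_cont i).comp (continuous_apply i)
  · have hs : ∀ i, (s : ∀ i, H i) i ∈ S.map (Pi.evalMonoidHom H i) := fun i => ⟨s, s.2, rfl⟩
    calc (∏ i, (g i).comp (Pi.evalMonoidHom H i)) s
        = ∏ i, φ (Pi.mulSingle i ((s : ∀ i, H i) i)) := by
          rw [MonoidHom.finsetProd_apply]
          exact Finset.prod_congr rfl fun i _ => hg i ⟨_, hs i⟩
      _ = φ s := by rw [← map_prod, Finset.univ_prod_mulSingle]
      _ = f s := DFunLike.congr_fun hφ s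

theorem stmt_12_general (n : ℕ) (H : Fin n → Type*) [∀ i, CommGroup (H i)]
    [∀ i, TopologicalSpace (H i)]
    (hemb : ∀ i, ∀ S : Subgroup (H i), Countable S → ∀ f : S →* Circle,
      ∃ g : H i →* Circle, Continuous g ∧ ∀ s : S, g s = f s) :
    ∀ S : Subgroup (∀ i, H i), Countable S → ∀ f : S →* Circle,
      ∃ g : (∀ i, H i) →* Circle, Continuous g ∧ ∀ s : S, g s = f s := by
  intro S hS
  refine S.isHEmbedded_of_forall_map_eval fun i => hemb i _ ?_
  rw [← SetLike.coe_sort_coe, Subgroup.coe_map, Set.countable_coe_iff]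
  exact (Set.countable_coe_iff.mp hS).image _

/-- Let `H₁, …, H_n` be abelian topological groups such that for each `i`, every
homomorphism from a countable subgroup of `H i` to the circle group extends to a
continuous character of `H i` (i.e. countable subgroups are h-embedded). Then every
homomorphism from a countable subgroup of the product `∀ i, H i` to the circle extends
to a continuous character of the product. -/
theorem stmt_12 (n : ℕ) (H : Fin n → Type*) [∀ i, CommGroup (H i)]
    [∀ i, TopologicalSpace (H i)] [∀ i, IsTopologicalGroup (H i)]
    (hemb : ∀ i, ∀ S : Subgroup (H i), Countable S → ∀ f : S →* Circle,
      ∃ g : H i →* Circle, Continuous g ∧ ∀ s : S, g s = f s) :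
    ∀ S : Subgroup (∀ i, H i), Countable S → ∀ f : S →* Circle,
      ∃ g : (∀ i, H i) →* Circle, Continuous g ∧ ∀ s : S, g s = f s :=
  stmt_12_general n H hemb
end

section
/- Every non-discrete compactly generated locally compact Hausdorff topological group that is topologically simple is separable and metrizable. -/
/-!
Take `T = S ∪ S⁻¹` for a compact generating set `S`. Given a neighbourhood `U` of `1` missing
some `g ≠ 1`, local compactness yields compact symmetric neighbourhoods `V 0 ⊆ U` and
`V (n + 1) * V (n + 1) ⊆ V n` with `t * V (n + 1) * t⁻¹ ⊆ V n` for `t ∈ T` (Kakutani–Kodaira).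
Then `K = ⋂ n, V n` is a closed subgroup normalised by `T`, hence normal, and `K ≠ G`, so
simplicity forces `K = 1`. By compactness the `V n` then form a countable basis at `1`, so `G` is
metrizable (Birkhoff–Kakutani); being σ-compact (`G = ⋃ n, T ^ n`), it is also separable.
-/

open Filter Set Topology TopologicalSpace Pointwise

section Group

variable {G : Type*} [Group G]

theorem Subgroup.normal_of_conj_mem_of_closure_eq_top {S : Set G} (hS : Subgroup.closure S = ⊤)
    {K : Subgroup G} (hK : ∀ c ∈ S ∪ S⁻¹, ∀ k ∈ K, c * k * c⁻¹ ∈ K) : K.Normal := by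
  rw [← Subgroup.normalizer_eq_top_iff, eq_top_iff, ← hS, Subgroup.closure_le]
  refine fun s hs => Subgroup.mem_normalizer_iff.2 fun k => ⟨hK s (Or.inl hs) k, fun hk => ?_⟩
  simpa [mul_assoc] using hK s⁻¹ (Or.inr (inv_mem_inv.2 hs)) _ hk

theorem Subgroup.closure_subset_iUnion_pow (S : Set G) :
    (Subgroup.closure S : Set G) ⊆ ⋃ n : ℕ, (S ∪ S⁻¹) ^ n := by
  intro x hx
  induction hx using Subgroup.closure_induction with
  | mem x hx => exact mem_iUnion.2 ⟨1, by simp [hx]⟩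
  | one => exact mem_iUnion.2 ⟨0, by simp⟩
  | mul x y _ _ hx hy =>
    obtain ⟨m, hm⟩ := mem_iUnion.1 hx
    obtain ⟨n, hn⟩ := mem_iUnion.1 hy
    exact mem_iUnion.2 ⟨m + n, pow_add (S ∪ S⁻¹) m n ▸ mul_mem_mul hm hn⟩
  | inv x _ hx =>
    obtain ⟨n, hn⟩ := mem_iUnion.1 hx
    have hT : (S ∪ S⁻¹)⁻¹ = S ∪ S⁻¹ := by rw [union_inv, inv_inv, union_comm]
    refine mem_iUnion.2 ⟨n, ?_⟩
    rw [← hT, inv_pow]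
    exact inv_mem_inv.2 hn

end Group

theorem IsCompact.pow {M : Type*} [Monoid M] [TopologicalSpace M] [ContinuousMul M] {s : Set M}
    (hs : IsCompact s) : ∀ n : ℕ, IsCompact (s ^ n)
  | 0 => by simp
  | n + 1 => by rw [pow_succ]; exact (hs.pow n).mul hs

section ConjStableNhdsSeq

variable {G : Type*} [Group G] [TopologicalSpace G]

structure IsConjStableNhdsSeq (C : Set G) (V : ℕ → Set G) : Prop where
  mem_nhds (n : ℕ) : V n ∈ 𝓝 1
  isCompact (n : ℕ) : IsCompact (V n)
  inv_eq (n : ℕ) : (V n)⁻¹ = V n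
  mul_subset (n : ℕ) : V (n + 1) * V (n + 1) ⊆ V n
  conj_mem (n : ℕ) : ∀ c ∈ C, ∀ v ∈ V (n + 1), c * v * c⁻¹ ∈ V n

namespace IsConjStableNhdsSeq

variable {C : Set G} {V : ℕ → Set G}

theorem succ_subset (hV : IsConjStableNhdsSeq C V) (n : ℕ) : V (n + 1) ⊆ V n :=
  (subset_mul_left _ (mem_of_mem_nhds (hV.mem_nhds (n + 1)))).trans (hV.mul_subset n)

variable (hV : IsConjStableNhdsSeq C V)

def subgroup : Subgroup G where
  carrier := ⋂ n, V n
  one_mem' := mem_iInter.2 fun n => mem_of_mem_nhds (hV.mem_nhds n)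
  mul_mem' ha hb := mem_iInter.2 fun n =>
    hV.mul_subset n (mul_mem_mul (mem_iInter.1 ha (n + 1)) (mem_iInter.1 hb (n + 1)))
  inv_mem' ha := mem_iInter.2 fun n => hV.inv_eq n ▸ inv_mem_inv.2 (mem_iInter.1 ha n)

theorem coe_subgroup : (hV.subgroup : Set G) = ⋂ n, V n := rfl

theorem isClosed_subgroup [T2Space G] : IsClosed (hV.subgroup : Set G) :=
  isClosed_iInter fun n => (hV.isCompact n).isClosed

theorem conj_mem_subgroup {c k : G} (hc : c ∈ C) (hk : k ∈ hV.subgroup) :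
    c * k * c⁻¹ ∈ hV.subgroup :=
  mem_iInter.2 fun n => hV.conj_mem n c hc k (mem_iInter.1 hk (n + 1))

theorem hasBasis_nhds_one [T2Space G] (hbot : hV.subgroup = ⊥) :
    (𝓝 (1 : G)).HasBasis (fun _ => True) V := by
  refine ⟨fun U => ⟨fun hU => ?_, fun ⟨n, _, hn⟩ => mem_of_superset (hV.mem_nhds n) hn⟩⟩
  obtain ⟨n, hn⟩ := exists_subset_nhds_of_isCompact
    (antitone_nat_of_succ_le hV.succ_subset).directed_ge hV.isCompact
    (by rw [← hV.coe_subgroup, hbot]; simpa using hU)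
  exact ⟨n, trivial, hn⟩

end IsConjStableNhdsSeq

end ConjStableNhdsSeq

section IsTopologicalGroup

variable {G : Type*} [Group G] [TopologicalSpace G] [IsTopologicalGroup G]

theorem sigmaCompactSpace_of_isCompact_of_closure_eq_top {S : Set G} (hS : IsCompact S)
    (hgen : Subgroup.closure S = ⊤) : SigmaCompactSpace G :=
  ⟨⟨fun n => (S ∪ S⁻¹) ^ n, (hS.union hS.inv).pow,
    univ_subset_iff.1 <| by simpa [hgen] using Subgroup.closure_subset_iUnion_pow S⟩⟩

theorem IsTopologicalGroup.metrizableSpace_of_isCountablyGenerated [T0Space G]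
    [(𝓝 (1 : G)).IsCountablyGenerated] : MetrizableSpace G :=
  letI := IsTopologicalGroup.rightUniformSpace G
  haveI : (uniformity G).IsCountablyGenerated := by
    rw [uniformity_eq_comap_nhds_one']
    exact comap.isCountablyGenerated _ _
  UniformSpace.metrizableSpace

theorem eventually_nhds_one_forall_conj_mem {C U : Set G} (hC : IsCompact C) (hU : U ∈ 𝓝 1) :
    ∀ᶠ v in 𝓝 (1 : G), ∀ c ∈ C, c * v * c⁻¹ ∈ U :=
  hC.eventually_forall_of_forall_eventually fun c _ =>
    (by fun_prop : Continuous fun p : G × G => p.2 * p.1 * p.2⁻¹).continuousAt.preimage_mem_nhds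
      (by simpa using hU)

theorem exists_isCompact_nhds_one_inv_eq_mul_subset_conj_mem [LocallyCompactSpace G]
    {C U : Set G} (hC : IsCompact C) (hU : U ∈ 𝓝 1) :
    ∃ V ∈ 𝓝 (1 : G), IsCompact V ∧ V⁻¹ = V ∧ V * V ⊆ U ∧ ∀ c ∈ C, ∀ v ∈ V, c * v * c⁻¹ ∈ U := by
  obtain ⟨L, hLc, hL⟩ := exists_compact_mem_nhds (1 : G)
  obtain ⟨V, hV, hVc, hVinv, hVW⟩ := exists_closed_nhds_one_inv_eq_mul_subset
    (inter_mem (inter_mem hU hL) (eventually_nhds_one_forall_conj_mem hC hU))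
  have hVsub : V ⊆ V * V := subset_mul_left V (mem_of_mem_nhds hV)
  refine ⟨V, hV, hLc.of_isClosed_subset hVc fun v hv => (hVW (hVsub hv)).1.2, hVinv,
    fun v hv => (hVW hv).1.1, fun c hc v hv => (hVW (hVsub hv)).2 c hc⟩

theorem exists_isConjStableNhdsSeq [LocallyCompactSpace G] {C U : Set G} (hC : IsCompact C)
    (hU : U ∈ 𝓝 1) : ∃ V, IsConjStableNhdsSeq C V ∧ V 0 ⊆ U := by
  choose! f hf_nhds hf_compact hf_inv hf_mul hf_conj using
    fun U (hU : U ∈ 𝓝 (1 : G)) => exists_isCompact_nhds_one_inv_eq_mul_subset_conj_mem hC hU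
  have hsucc (n : ℕ) : f^[n + 2] U = f (f^[n + 1] U) := Function.iterate_succ_apply' f _ U
  have hnhds (n : ℕ) : f^[n + 1] U ∈ 𝓝 1 := by
    induction n with
    | zero => exact hf_nhds U hU
    | succ n ih => rw [hsucc]; exact hf_nhds _ ih
  refine ⟨fun n => f^[n + 1] U,
    ⟨hnhds, fun n => ?_, fun n => ?_, fun n => ?_, fun n => ?_⟩, ?_⟩
  · cases n with
    | zero => exact hf_compact U hU
    | succ n => rw [hsucc]; exact hf_compact _ (hnhds n)
  · cases n with
    | zero => exact hf_inv U hU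
    | succ n => rw [hsucc]; exact hf_inv _ (hnhds n)
  · simp only [hsucc]; exact hf_mul _ (hnhds n)
  · simp only [hsucc]; exact hf_conj _ (hnhds n)
  · exact fun v hv => hf_mul U hU (subset_mul_left _ (mem_of_mem_nhds (hf_nhds U hU)) hv)

end IsTopologicalGroup

theorem stmt_15_general {G : Type*} [Group G] [TopologicalSpace G] [IsTopologicalGroup G]
    [T2Space G] [LocallyCompactSpace G]
    (hcg : ∃ S : Set G, IsCompact S ∧ Subgroup.closure S = ⊤)
    (hsimple : ∀ N : Subgroup G, N.Normal → IsClosed (N : Set G) → N = ⊥ ∨ N = ⊤) :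
    TopologicalSpace.SeparableSpace G ∧ TopologicalSpace.MetrizableSpace G := by
  obtain ⟨S, hS, hgen⟩ := hcg
  cases subsingleton_or_nontrivial G
  · exact ⟨inferInstance, inferInstance⟩
  obtain ⟨g, hg⟩ := exists_ne (1 : G)
  obtain ⟨V, hV, hV0⟩ := exists_isConjStableNhdsSeq (hS.union hS.inv)
    (isOpen_compl_singleton.mem_nhds hg.symm)
  have hnormal : hV.subgroup.Normal :=
    Subgroup.normal_of_conj_mem_of_closure_eq_top hgen fun c hc _ hk => hV.conj_mem_subgroup hc hk
  have hbot : hV.subgroup = ⊥ := (hsimple _ hnormal hV.isClosed_subgroup).resolve_right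
    fun htop => hV0 (mem_iInter.1 (htop ▸ Subgroup.mem_top g : g ∈ hV.subgroup) 0) rfl
  have := (hV.hasBasis_nhds_one hbot).isCountablyGenerated
  have := IsTopologicalGroup.metrizableSpace_of_isCountablyGenerated (G := G)
  have := sigmaCompactSpace_of_isCompact_of_closure_eq_top hS hgen
  let := pseudoMetrizableSpacePseudoMetric G
  exact ⟨inferInstance, inferInstance⟩

/-- Every non-discrete compactly generated locally compact Hausdorff topological group
that is topologically simple is separable and metrizable. -/
theorem stmt_15 {G : Type*} [Group G] [TopologicalSpace G] [IsTopologicalGroup G]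
    [T2Space G] [LocallyCompactSpace G]
    (hnd : ¬ DiscreteTopology G)
    (hcg : ∃ S : Set G, IsCompact S ∧ Subgroup.closure S = ⊤)
    (hsimple : ∀ N : Subgroup G, N.Normal → IsClosed (N : Set G) → N = ⊥ ∨ N = ⊤) :
    TopologicalSpace.SeparableSpace G ∧ TopologicalSpace.MetrizableSpace G :=
  stmt_15_general hcg hsimple
end

section
/- There exists a countably infinite precompact Hausdorff abelian topological group H such that every quotient group of H by a closed subgroup is either trivial or non-metrizable. -/
/-!
`H` is the Prüfer group `{z ∈ 𝕋 | z ^ 2 ^ n = 1 for some n}` with the topology induced by its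
characters `x ↦ x ^ c`, `c ∈ ℤ₂`, i.e. by an embedding into the compact group `𝕋 ^ ℤ₂`.
Its proper subgroups are finite, and a quotient by a finite subgroup is locally homeomorphic to
`H`, so a metrizable proper quotient would give `1 ∈ H` a countable neighbourhood basis.
That is impossible: `H` is infinite, hence not discrete inside a compact group, and no
sequence `u k ≠ 1` tends to `1`. Indeed, the closed sets
`F K = {c | dist (u k ^ c) 1 ≤ 1/2 for k ≥ K}` cover `ℤ₂`, so by Baire one of them contains a
ball `c + 2 ^ m ℤ₂`; but once `u k ^ 2 ^ m ≠ 1` there is `j ≥ m` with `u k ^ 2 ^ j = -1`, and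
then `u k ^ (c + 2 ^ j) = -(u k ^ c)` and `u k ^ c` cannot both be close to `1`.
-/

open Filter Topology

theorem pow_pow_eq_one_of_le {M : Type*} [Monoid M] {x : M} {p a b : ℕ} (h : x ^ p ^ a = 1)
    (hab : a ≤ b) : x ^ p ^ b = 1 :=
  orderOf_dvd_iff_pow_eq_one.1 ((orderOf_dvd_of_pow_eq_one h).trans (pow_dvd_pow p hab))

section padicPow

variable {p : ℕ} [Fact p.Prime] {G : Type*} [Group G]

/-- `x ^ c` for a `p`-adic integer `c`, meaningful when `x` has order `p ^ m`: then `c.appr` at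
index `orderOf x = p ^ m ≥ m` is congruent to `c` modulo `p ^ m`. -/
noncomputable def padicPow (c : ℤ_[p]) (x : G) : G := x ^ c.appr (orderOf x)

lemma padicPow_eq_zpow {x : G} {n : ℕ} (hx : x ^ p ^ n = 1) {c : ℤ_[p]} {b : ℤ}
    (hcb : ‖c - b‖ ≤ (p : ℝ) ^ (-n : ℤ)) : padicPow c x = x ^ b := by
  have hp : (1 : ℝ) ≤ p := mod_cast (Fact.out : p.Prime).one_lt.le
  obtain ⟨m, hmn, hm⟩ := (Nat.dvd_prime_pow Fact.out).1 (orderOf_dvd_of_pow_eq_one hx)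
  have happr : ‖c - c.appr (orderOf x)‖ ≤ (p : ℝ) ^ (-m : ℤ) := by
    refine ((PadicInt.norm_le_pow_iff_mem_span_pow _ _).2 (PadicInt.appr_spec _ c)).trans ?_
    gcongr
    rw [hm]
    exact_mod_cast (Nat.lt_pow_self (Fact.out : p.Prime).one_lt).le
  have hdvd : (p ^ m : ℤ) ∣ c.appr (orderOf x) - b := by
    refine PadicInt.norm_int_le_pow_iff_dvd.1 ?_
    have : ((c.appr (orderOf x) - b : ℤ) : ℤ_[p]) = (c - b) + -(c - c.appr (orderOf x)) := by
      push_cast; ring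
    rw [this]
    exact (PadicInt.nonarchimedean _ _).trans
      (max_le (hcb.trans (by gcongr)) (by rwa [norm_neg]))
  rw [padicPow, ← zpow_natCast, zpow_eq_zpow_iff_modEq, Int.modEq_iff_dvd, ← dvd_neg, neg_sub]
  rw [hm] at hdvd ⊢
  exact_mod_cast hdvd

lemma padicPow_eq_pow_appr {x : G} {n : ℕ} (hx : x ^ p ^ n = 1) (c : ℤ_[p]) :
    padicPow c x = x ^ c.appr n := by
  rw [padicPow_eq_zpow hx (b := c.appr n), zpow_natCast]
  exact_mod_cast (PadicInt.norm_le_pow_iff_mem_span_pow _ _).2 (PadicInt.appr_spec n c)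

lemma padicPow_one {x : G} {n : ℕ} (hx : x ^ p ^ n = 1) : padicPow (1 : ℤ_[p]) x = x := by
  simpa using padicPow_eq_zpow hx (c := 1) (b := 1) (by simp)

lemma padicPow_add_natCast {x : G} {n : ℕ} (hx : x ^ p ^ n = 1) (c : ℤ_[p]) (b : ℕ) :
    padicPow (c + (b : ℤ_[p])) x = padicPow c x * x ^ b := by
  rw [padicPow_eq_pow_appr hx c, ← pow_add, ← zpow_natCast]
  refine padicPow_eq_zpow hx ?_
  push_cast
  rw [add_sub_add_right_eq_sub]
  exact (PadicInt.norm_le_pow_iff_mem_span_pow _ _).2 (PadicInt.appr_spec n c)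

lemma isLocallyConstant_padicPow {x : G} {n : ℕ} (hx : x ^ p ^ n = 1) :
    IsLocallyConstant fun c : ℤ_[p] ↦ padicPow c x := by
  have hp : (0 : ℝ) < p := mod_cast (Fact.out : p.Prime).pos
  refine (IsLocallyConstant.iff_eventually_eq _).2 fun c ↦ ?_
  filter_upwards [Metric.closedBall_mem_nhds c (zpow_pos hp (-n : ℤ))] with c' hc'
  have hc : ‖c - c.appr n‖ ≤ (p : ℝ) ^ (-n : ℤ) :=
    (PadicInt.norm_le_pow_iff_mem_span_pow _ _).2 (PadicInt.appr_spec n c)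
  rw [padicPow_eq_pow_appr hx c, ← zpow_natCast]
  refine padicPow_eq_zpow hx ?_
  rw [← sub_add_sub_cancel c' c]
  exact (PadicInt.nonarchimedean _ _).trans (max_le (by rwa [← dist_eq_norm]) hc)

lemma padicPow_mul {G : Type*} [CommGroup G] {x y : G} {n : ℕ} (hx : x ^ p ^ n = 1)
    (hy : y ^ p ^ n = 1) (c : ℤ_[p]) : padicPow c (x * y) = padicPow c x * padicPow c y := by
  have hxy : (x * y) ^ p ^ n = 1 := by rw [mul_pow, hx, hy, one_mul]
  rw [padicPow_eq_pow_appr hx, padicPow_eq_pow_appr hy, padicPow_eq_pow_appr hxy, mul_pow]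

end padicPow

namespace Circle

theorem finite_setOf_pow_eq_one {n : ℕ} (hn : 0 < n) : {z : Circle | z ^ n = 1}.Finite := by
  refine ((Polynomial.nthRootsFinset n (1 : ℂ)).finite_toSet.preimage
    (f := ((↑) : Circle → ℂ)) coe_injective.injOn).subset
    fun (z : Circle) (hz : z ^ n = 1) ↦ ?_
  refine Finset.mem_coe.2 ((Polynomial.mem_nthRootsFinset hn _).2 ?_)
  rw [← coe_pow, hz, coe_one]

theorem eq_neg_one_of_sq_eq_one {z : Circle} (h : z ^ 2 = 1) (h1 : z ≠ 1) : z = -1 := by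
  have : (z : ℂ) ^ 2 = 1 := by rw [← coe_pow, h, coe_one]
  rcases sq_eq_one_iff.1 this with h' | h'
  · exact absurd (coe_inj.1 h') h1
  · exact coe_inj.1 h'

theorem exists_pow_eq_of_isPrimitiveRoot {g z : Circle} {n : ℕ} [NeZero n]
    (hg : IsPrimitiveRoot g n) (hz : z ^ n = 1) : ∃ i, g ^ i = z := by
  obtain ⟨i, -, hi⟩ := (hg.map_of_injective (f := coeHom) coe_injective).eq_pow_of_pow_eq_one
    (ξ := (z : ℂ)) (by rw [← coe_pow, hz, coe_one])
  exact ⟨i, coe_injective (by rw [coe_pow]; exact hi)⟩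

theorem exp_pi_div_two_pow_pow (m : ℕ) : exp (Real.pi / 2 ^ m) ^ 2 ^ m = exp Real.pi := by
  rw [← exp_natCast_mul]
  congr 1
  push_cast
  field_simp

theorem exp_pi_div_two_pow_pow_succ (m : ℕ) : exp (Real.pi / 2 ^ m) ^ 2 ^ (m + 1) = 1 := by
  rw [pow_succ, pow_mul, exp_pi_div_two_pow_pow, ← exp_natCast_mul]
  push_cast
  exact exp_two_pi

theorem dist_neg_self (z : Circle) : dist (-z) z = 2 := by
  change dist ((-z : Circle) : ℂ) z = 2
  rw [coe_neg, dist_eq_norm, ← neg_add', norm_neg, ← two_mul, norm_mul, norm_coe]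
  norm_num

end Circle

theorem exists_isEmbedding_denseRange_compact {G K : Type} [Group G] [TopologicalSpace G]
    [CommGroup K] [TopologicalSpace K] [IsTopologicalGroup K] [T2Space K] [CompactSpace K]
    (f : G →* K) (hf : IsEmbedding f) :
    ∃ (C : Type) (_ : CommGroup C) (_ : TopologicalSpace C),
      IsTopologicalGroup C ∧ T2Space C ∧ CompactSpace C ∧
      ∃ ι : G →* C, Continuous ι ∧ IsEmbedding ι ∧ DenseRange ι := by
  let C := f.range.topologicalClosure
  have hC : ∀ x, f x ∈ C := fun x ↦ f.range.le_topologicalClosure ⟨x, rfl⟩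
  have hemb : IsEmbedding (f.codRestrict C hC) := hf.codRestrict C hC
  refine ⟨C, inferInstance, inferInstance, inferInstance, inferInstance,
    isCompact_iff_compactSpace.1 f.range.isClosed_topologicalClosure.isCompact,
    f.codRestrict C hC, hemb.continuous, hemb, ?_⟩
  rw [DenseRange, Subtype.dense_iff, ← Set.range_comp]
  exact fun x hx ↦ hx

theorem finite_of_isEmbedding_of_discreteTopology {G K : Type*} [Group G] [TopologicalSpace G]
    [DiscreteTopology G] [Group K] [TopologicalSpace K] [IsTopologicalGroup K] [T2Space K]
    [CompactSpace K] (f : G →* K) (hf : IsEmbedding f) : Finite G := by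
  have hdisc : IsDiscrete (f.range : Set K) := by
    rw [f.coe_range, ← Set.image_univ]
    exact IsDiscrete.univ.image hf.isInducing
  have := f.tendsto_coe_cofinite_of_discrete hf.injective hdisc
  rw [cocompact_eq_bot] at this
  exact cofinite_eq_bot_iff.1 (map_eq_bot_iff.1 (le_bot_iff.1 this))

theorem isCountablyGenerated_nhds_one_of_finite {G : Type*} [Group G] [TopologicalSpace G]
    [IsTopologicalGroup G] [T1Space G] {N : Subgroup G} (hN : (N : Set G).Finite)
    [FirstCountableTopology (G ⧸ N)] : (𝓝 (1 : G)).IsCountablyGenerated := by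
  obtain ⟨U, hU, -, hUN⟩ := hN.isDiscrete.exists_nhds_eq_one_of_image_mulRight_inter_nonempty
  have hW : IsOpen (interior U) := isOpen_interior
  have h1 : (1 : G) ∈ interior U := mem_interior_iff_mem_nhds.2 hU
  have hinj : Set.InjOn (QuotientGroup.mk : G → G ⧸ N) (interior U) := by
    intro a ha b hb hab
    have := hUN _ (QuotientGroup.eq.1 hab)
      ⟨b, ⟨a, interior_subset ha, by group⟩, interior_subset hb⟩
    rwa [inv_mul_eq_one] at this
  have hemb : IsOpenEmbedding ((interior U).domRestrict (QuotientGroup.mk : G → G ⧸ N)) :=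
    .of_continuous_injective_isOpenMap (QuotientGroup.continuous_mk.comp continuous_subtype_val)
      hinj.injective (QuotientGroup.isOpenMap_coe.domRestrict hW)
  have := hemb.isEmbedding.firstCountableTopology
  rw [← hW.isOpenEmbedding_subtypeVal.map_nhds_eq ⟨1, h1⟩]
  infer_instance

/-- The Prüfer `2`-group with the topology induced by its characters `x ↦ x ^ c`, `c ∈ ℤ₂`.
These are all of its characters, so this is its Bohr topology. -/
def Prufer : Type := CommGroup.primaryComponent Circle 2

namespace Prufer

noncomputable instance : CommGroup Prufer :=
  inferInstanceAs (CommGroup (CommGroup.primaryComponent Circle 2))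

noncomputable def val : Prufer →* Circle := (CommGroup.primaryComponent Circle 2).subtype

lemma val_injective : Function.Injective val := Subtype.val_injective

lemma exists_pow_two_pow_eq_one (x : Prufer) : ∃ n, x ^ 2 ^ n = 1 := by
  obtain ⟨n, hn⟩ := x.2
  exact ⟨n, val_injective (by rwa [map_pow, map_one])⟩

lemma finite_setOf_pow_two_pow_eq_one (m : ℕ) : {x : Prufer | x ^ 2 ^ m = 1}.Finite :=
  ((Circle.finite_setOf_pow_eq_one (pow_pos two_pos m)).preimage val_injective.injOn).subset
    fun x (hx : x ^ 2 ^ m = 1) ↦ by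
      show val x ^ 2 ^ m = 1
      rw [← map_pow, hx, map_one]

lemma exists_lt_orderOf_eq {x : Prufer} {m : ℕ} (hx : x ^ 2 ^ m ≠ 1) :
    ∃ e, m < e ∧ orderOf x = 2 ^ e := by
  obtain ⟨e, he⟩ := CommGroup.mem_primaryComponent_iff_orderOf.1 x.2
  replace he : orderOf x = 2 ^ e := (orderOf_injective val val_injective x).symm.trans he
  refine ⟨e, lt_of_not_ge fun hem ↦ hx ?_, he⟩
  exact orderOf_dvd_iff_pow_eq_one.1 (he ▸ pow_dvd_pow 2 hem)

lemma mem_of_pow_two_pow_ne_one {N : Subgroup Prufer} {g z : Prufer} {m : ℕ} (hg : g ∈ N)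
    (hgm : g ^ 2 ^ m ≠ 1) (hz : z ^ 2 ^ m = 1) : z ∈ N := by
  obtain ⟨e, hme, he⟩ := exists_lt_orderOf_eq hgm
  have hprim : IsPrimitiveRoot (val (g ^ 2 ^ (e - m))) (2 ^ m) := by
    have := ((IsPrimitiveRoot.orderOf g).pow_of_dvd (pow_ne_zero _ two_ne_zero)
      (he ▸ pow_dvd_pow 2 (Nat.sub_le e m))).map_of_injective val_injective
    rwa [he, Nat.pow_div (Nat.sub_le e m) two_pos, Nat.sub_sub_self hme.le] at this
  obtain ⟨i, hi⟩ := Circle.exists_pow_eq_of_isPrimitiveRoot hprim (z := val z)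
    (by rw [← map_pow, hz, map_one])
  have hzi : (g ^ 2 ^ (e - m)) ^ i = z := val_injective (by rwa [map_pow])
  exact hzi ▸ N.pow_mem (N.pow_mem hg _) i

theorem finite_of_ne_top {N : Subgroup Prufer} (hN : N ≠ ⊤) : (N : Set Prufer).Finite := by
  by_contra hfin
  refine hN (eq_top_iff.2 fun z _ ↦ ?_)
  obtain ⟨m, hz⟩ := exists_pow_two_pow_eq_one z
  obtain ⟨g, hg, hgm⟩ : ∃ g ∈ N, g ^ 2 ^ m ≠ 1 := by
    by_contra! h
    exact hfin ((finite_setOf_pow_two_pow_eq_one m).subset h)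
  exact mem_of_pow_two_pow_ne_one hg hgm hz

lemma exists_le_val_pow_eq_neg_one {x : Prufer} {m : ℕ} (hx : x ^ 2 ^ m ≠ 1) :
    ∃ j, m ≤ j ∧ val (x ^ 2 ^ j) = -1 := by
  obtain ⟨e, hme, he⟩ := exists_lt_orderOf_eq hx
  refine ⟨e - 1, by omega, Circle.eq_neg_one_of_sq_eq_one ?_ ?_⟩
  · rw [← map_pow, ← pow_mul, ← pow_succ, Nat.sub_add_cancel (by omega), ← he,
      pow_orderOf_eq_one, map_one]
  · rw [Ne, ← map_one val, val_injective.eq_iff, ← orderOf_dvd_iff_pow_eq_one, he]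
    exact Nat.pow_dvd_pow_iff_le_right'.not.2 (by omega)

noncomputable def characters : Prufer →* (ℤ_[2] → Circle) :=
  MonoidHom.mk' (fun x c ↦ val (padicPow c x)) fun x y ↦ by
    obtain ⟨n, hx⟩ := exists_pow_two_pow_eq_one x
    obtain ⟨m, hy⟩ := exists_pow_two_pow_eq_one y
    funext c
    rw [padicPow_mul (pow_pow_eq_one_of_le hx (le_max_left n m))
      (pow_pow_eq_one_of_le hy (le_max_right n m)), map_mul, Pi.mul_apply]

lemma characters_apply (x : Prufer) (c : ℤ_[2]) : characters x c = val (padicPow c x) := rfl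

lemma characters_injective : Function.Injective characters := fun x y h ↦ by
  obtain ⟨n, hx⟩ := exists_pow_two_pow_eq_one x
  obtain ⟨m, hy⟩ := exists_pow_two_pow_eq_one y
  have := congrFun h 1
  rwa [characters_apply, characters_apply, padicPow_one hx, padicPow_one hy,
    val_injective.eq_iff] at this

lemma continuous_characters_apply (x : Prufer) : Continuous (characters x) := by
  obtain ⟨n, hx⟩ := exists_pow_two_pow_eq_one x
  exact ((isLocallyConstant_padicPow hx).comp val).continuous

noncomputable instance : TopologicalSpace Prufer := .induced characters inferInstance

lemma isEmbedding_characters : IsEmbedding characters := ⟨⟨rfl⟩, characters_injective⟩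

instance : IsTopologicalGroup Prufer :=
  isEmbedding_characters.isInducing.topologicalGroup characters

instance : T2Space Prufer := isEmbedding_characters.t2Space

instance : Countable Prufer :=
  Set.Countable.to_subtype (s := (CommGroup.primaryComponent Circle 2 : Set Circle)) <|
    (Set.countable_iUnion fun n ↦
      (Circle.finite_setOf_pow_eq_one (pow_pos two_pos n)).countable).mono
        fun _ hz ↦ Set.mem_iUnion.2 hz

noncomputable def zeta (m : ℕ) : Prufer :=
  ⟨Circle.exp (Real.pi / 2 ^ m), m + 1, Circle.exp_pi_div_two_pow_pow_succ m⟩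

lemma zeta_pow_two_pow_succ (m : ℕ) : zeta m ^ 2 ^ (m + 1) = 1 :=
  val_injective (by rw [map_pow, map_one]; exact Circle.exp_pi_div_two_pow_pow_succ m)

lemma zeta_pow_two_pow_ne_one (m : ℕ) : zeta m ^ 2 ^ m ≠ 1 := fun h ↦
  Circle.exp_pi_ne_one <| by
    rw [← Circle.exp_pi_div_two_pow_pow m, ← map_one val, ← h, map_pow]
    rfl

instance : Infinite Prufer :=
  Infinite.of_injective zeta <| .of_lt_imp_ne fun m' m hlt heq ↦
    zeta_pow_two_pow_ne_one m (heq ▸ pow_pow_eq_one_of_le (zeta_pow_two_pow_succ m') hlt)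

theorem not_tendsto_nhdsNE_one (u : ℕ → Prufer) : ¬Tendsto u atTop (𝓝[≠] 1) := by
  intro hu
  let F (K : ℕ) : Set ℤ_[2] := {c | ∀ k ≥ K, characters (u k) c ∈ Metric.closedBall 1 (1 / 2)}
  have hF_closed (K : ℕ) : IsClosed (F K) := by
    simp only [F, Set.ofPred_forall]
    exact isClosed_iInter fun k ↦ isClosed_iInter fun _ ↦
      Metric.isClosed_closedBall.preimage (continuous_characters_apply (u k))
  have hF_cover : ⋃ K, F K = Set.univ := by
    refine Set.eq_univ_of_forall fun c ↦ Set.mem_iUnion.2 (eventually_atTop.1 ?_)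
    have hc : Continuous fun x ↦ characters x c :=
      (continuous_apply c).comp continuous_induced_dom
    exact ((hc.tendsto' 1 1 (by simp)).comp (hu.mono_right nhdsWithin_le_nhds)).eventually
      (Metric.closedBall_mem_nhds 1 (by norm_num))
  obtain ⟨K, c, hc⟩ := nonempty_interior_of_iUnion_of_closed hF_closed hF_cover
  obtain ⟨ε, hε, hball⟩ := Metric.isOpen_iff.1 isOpen_interior c hc
  obtain ⟨m, hm⟩ := exists_pow_lt_of_lt_one hε (by norm_num : (1 / 2 : ℝ) < 1)
  obtain ⟨k, hkm, hkK⟩ := (((hu.mono_right (nhdsNE_le_cofinite 1)).eventually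
    (finite_setOf_pow_two_pow_eq_one m).compl_mem_cofinite).and (eventually_ge_atTop K)).exists
  obtain ⟨j, hmj, hj⟩ := exists_le_val_pow_eq_neg_one hkm
  obtain ⟨n, hn⟩ := exists_pow_two_pow_eq_one (u k)
  have hshift : c + ((2 ^ j : ℕ) : ℤ_[2]) ∈ F K := by
    refine interior_subset (hball ?_)
    rw [Metric.mem_ball, dist_eq_norm, add_sub_cancel_left, Nat.cast_pow, norm_pow,
      PadicInt.norm_p]
    push_cast
    exact (pow_le_pow_of_le_one (by norm_num) (by norm_num) hmj).trans_lt (by simpa using hm)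
  have hneg : characters (u k) (c + ((2 ^ j : ℕ) : ℤ_[2])) = -characters (u k) c := by
    rw [characters_apply, padicPow_add_natCast hn, map_mul, hj, mul_neg_one, characters_apply]
  have h1 := hshift k hkK
  have h0 := interior_subset hc k hkK
  rw [hneg] at h1
  rw [Metric.mem_closedBall] at h0 h1
  have := (Circle.dist_neg_self (characters (u k) c)).symm.le.trans (dist_triangle_right _ _ 1)
  linarith

theorem not_isCountablyGenerated_nhds_one : ¬(𝓝 (1 : Prufer)).IsCountablyGenerated := by
  intro
  rcases (𝓝[≠] (1 : Prufer)).eq_or_neBot with h | h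
  · have : DiscreteTopology Prufer :=
      discreteTopology_of_isOpen_singleton_one ((isOpen_singleton_iff_punctured_nhds 1).2 h)
    exact (finite_of_isEmbedding_of_discreteTopology characters isEmbedding_characters).false
  · obtain ⟨u, hu⟩ := (𝓝[≠] (1 : Prufer)).exists_seq_tendsto
    exact not_tendsto_nhdsNE_one u hu

end Prufer

/-- There exists a countably infinite precompact Hausdorff abelian topological group `H`
(precompact: `H` embeds densely in a compact Hausdorff group) such that every quotient
group of `H` by a closed subgroup is either trivial or non-metrizable. -/
theorem stmt_17 :
    ∃ (H : Type) (_ : CommGroup H) (_ : TopologicalSpace H),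
      IsTopologicalGroup H ∧ T2Space H ∧ Countable H ∧ Infinite H ∧
      (∃ (C : Type) (_ : CommGroup C) (_ : TopologicalSpace C),
        IsTopologicalGroup C ∧ T2Space C ∧ CompactSpace C ∧
        ∃ ι : H →* C, Continuous ι ∧ Topology.IsEmbedding ι ∧ DenseRange ι) ∧
      ∀ N : Subgroup H, IsClosed (N : Set H) →
        Subsingleton (H ⧸ N) ∨ ¬ TopologicalSpace.MetrizableSpace (H ⧸ N) := by
  refine ⟨Prufer, inferInstance, inferInstance, inferInstance, inferInstance, inferInstance,
    inferInstance, exists_isEmbedding_denseRange_compact _ Prufer.isEmbedding_characters,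
    fun N _ ↦ ?_⟩
  rcases eq_or_ne N ⊤ with rfl | hN
  · exact .inl QuotientGroup.subsingleton_quotient_top
  · refine .inr fun _ ↦ Prufer.not_isCountablyGenerated_nhds_one ?_
    exact isCountablyGenerated_nhds_one_of_finite (Prufer.finite_of_ne_top hN)
end

section
/- Every non-separable compact Hausdorff abelian topological group G whose Pontryagin dual has infinite torsion-free rank admits the infinite torus T^ω as a quotient group. -/
/-!
The characters `x i` assemble into a continuous homomorphism `f : G → 𝕋^ℕ`. As `G` is compact,
`f` is a closed map, hence a quotient map, hence open; so only surjectivity is at stake, and by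
compactness it suffices to prescribe finitely many coordinates at once. This goes by induction on
the finite set `s` of coordinates. If `x j` did not map the kernel of `G → 𝕋^s` onto `𝕋`, the
image would be a proper closed subgroup of `𝕋`, hence killed by some `d ≠ 0`. Then `(x j)^d`
factors through `𝕋^s`, whose continuous characters are monomials `∏ zᵢ^mᵢ` (Fourier analysis on
the circle), and this is a nontrivial relation among the `x i`.
-/

open scoped Real
open Function MeasureTheory

namespace AddCircle

variable {T : ℝ} [Fact (0 < T)]

theorem exists_fourierCoeff_ne_zero_of_norm_eq_one (f : C(AddCircle T, ℂ))
    (hf : ∀ x, ‖f x‖ = 1) : ∃ n, fourierCoeff f n ≠ 0 := by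
  by_contra! h
  have parseval := hasSum_sq_fourierCoeff (ContinuousMap.toLp (E := ℂ) 2 haarAddCircle ℂ f)
  simp only [fourierCoeff_toLp, h, norm_zero, zero_pow two_ne_zero] at parseval
  have hnorm : ∫ t, ‖ContinuousMap.toLp (E := ℂ) 2 haarAddCircle ℂ f t‖ ^ 2 ∂haarAddCircle
      = (1 : ℝ) := by
    rw [integral_congr_ae (g := fun _ => (1 : ℝ))]
    · simp
    · filter_upwards [ContinuousMap.coeFn_toLp (E := ℂ) (p := 2) (μ := haarAddCircle) (𝕜 := ℂ) f]
        with t ht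
      rw [ht, hf t, one_pow]
  exact zero_ne_one (hnorm ▸ hasSum_zero.unique parseval)

theorem exists_eq_fourier_of_map_add (f : C(AddCircle T, ℂ))
    (hadd : ∀ x y, f (x + y) = f x * f y) (hf : ∀ x, ‖f x‖ = 1) : ∃ n, f = fourier n := by
  obtain ⟨n, hn⟩ := exists_fourierCoeff_ne_zero_of_norm_eq_one f hf
  refine ⟨n, ContinuousMap.ext fun y => ?_⟩
  -- translating by `y` multiplies the coefficient `∫ e₋ₙ f` by `e₋ₙ(y) f(y)`
  have htrans : fourierCoeff f n = fourier (-n) y * f y * fourierCoeff f n := by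
    calc fourierCoeff f n = ∫ t, fourier (-n) (t + y) • f (t + y) ∂haarAddCircle :=
          (integral_add_right_eq_self (fun t => fourier (-n) t • f t) y).symm
      _ = ∫ t, (fourier (-n) y * f y) * (fourier (-n) t • f t) ∂haarAddCircle := by
          congr 1; ext t
          simp only [hadd, smul_eq_mul, fourier_apply, smul_add, toCircle_add, Circle.coe_mul]
          ring
      _ = fourier (-n) y * f y * fourierCoeff f n := integral_const_mul _ _
  have h1 : fourier (-n) y * f y = 1 := by
    simpa using mul_right_cancel₀ hn (htrans.symm.trans (one_mul _).symm)
  calc f y = fourier n y * (fourier (-n) y * f y) := by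
        rw [← mul_assoc, ← fourier_add, add_neg_cancel, fourier_zero, one_mul]
    _ = fourier n y := by rw [h1, mul_one]

end AddCircle

namespace Circle

theorem exists_eq_zpow_of_continuous_s19 (ψ : Circle →* Circle) (hψ : Continuous ψ) :
    ∃ n : ℤ, ∀ z, ψ z = z ^ n := by
  have hT : (2 * π) ≠ 0 := by positivity
  have : Fact (0 < 2 * π) := ⟨by positivity⟩
  let e := AddCircle.homeomorphCircle hT
  let f : C(AddCircle (2 * π), ℂ) := ⟨fun x => ψ (e x), by fun_prop⟩
  obtain ⟨n, hn⟩ := AddCircle.exists_eq_fourier_of_map_add f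
    (fun x y => by simp [f, e, AddCircle.homeomorphCircle_apply, AddCircle.toCircle_add])
    (fun x => by simp [f, norm_coe])
  refine ⟨n, fun z => ?_⟩
  obtain ⟨x, rfl⟩ := e.surjective z
  have hx : (ψ (e x) : ℂ) = fourier n x := congr($hn x)
  rw [fourier_apply, AddCircle.toCircle_zsmul, ← AddCircle.homeomorphCircle_apply hT] at hx
  exact coe_injective hx

theorem exists_zpow_eq_one_of_isClosed_of_ne_top (H : Subgroup Circle)
    (hH : IsClosed (H : Set Circle)) (hne : H ≠ ⊤) : ∃ d : ℤ, d ≠ 0 ∧ ∀ z ∈ H, z ^ d = 1 := by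
  let S : AddSubgroup ℝ := (Subgroup.toAddSubgroup H).comap expHom
  have hmem (t : ℝ) : t ∈ S ↔ exp t ∈ H := Iff.rfl
  have hS : IsClosed (S : Set ℝ) := hH.preimage exp.continuous
  rcases S.dense_or_cyclic with hdense | ⟨a, ha⟩
  · refine absurd (Subgroup.eq_top_iff' H |>.2 fun z => ?_) hne
    rw [← exp_arg z, ← hmem]
    have hSuniv : (S : Set ℝ) = Set.univ := hS.closure_eq ▸ hdense.closure_eq
    exact Set.eq_univ_iff_forall.1 hSuniv _
  · have h2π : 2 * π ∈ S := by rw [hmem, exp_two_pi]; exact one_mem H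
    rw [ha, AddSubgroup.mem_closure_singleton] at h2π
    obtain ⟨d, hd⟩ := h2π
    refine ⟨d, ?_, fun z hz => ?_⟩
    · rintro rfl
      simp [Real.pi_ne_zero] at hd
    · have harg : (z : ℂ).arg ∈ S := by rwa [hmem, exp_arg]
      rw [ha, AddSubgroup.mem_closure_singleton] at harg
      obtain ⟨k, hk⟩ := harg
      rw [← exp_arg z, ← hk, ← exp_zsmul, smul_smul, mul_comm, ← smul_smul, hd, exp_zsmul,
        exp_two_pi, one_zpow]

end Circle

theorem MonoidHom.exists_eq_prod_zpow_of_continuous {ι : Type*} [Fintype ι] [DecidableEq ι]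
    (ψ : (ι → Circle) →* Circle) (hψ : Continuous ψ) : ∃ m : ι → ℤ, ∀ z, ψ z = ∏ i, z i ^ m i := by
  choose m hm using fun i => Circle.exists_eq_zpow_of_continuous_s19
    (ψ.comp (MonoidHom.mulSingle (fun _ => Circle) i))
    (hψ.comp (continuous_mulSingle (A := fun _ : ι => Circle) i))
  refine ⟨m, fun z => ?_⟩
  conv_lhs => rw [← Finset.univ_prod_mulSingle z]
  simp only [map_prod]
  exact Finset.prod_congr rfl fun i _ => hm i (z i)

theorem MonoidHom.exists_continuous_comp_eq_of_ker_le {G K M : Type*} [Group G]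
    [TopologicalSpace G] [CompactSpace G] [Group K] [TopologicalSpace K] [T2Space K] [Group M]
    [TopologicalSpace M] {Φ : G →* K} (hΦc : Continuous Φ) (hΦs : Surjective Φ) {χ : G →* M}
    (hχ : Continuous χ) (hker : Φ.ker ≤ χ.ker) :
    ∃ ψ : K →* M, Continuous ψ ∧ ∀ g, ψ (Φ g) = χ g := by
  let ψ := Φ.liftOfSurjective hΦs ⟨χ, hker⟩
  have hψΦ (g : G) : ψ (Φ g) = χ g := Φ.liftOfRightInverse_comp_apply _ _ _ g
  refine ⟨ψ, ?_, hψΦ⟩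
  rw [(hΦc.isClosedMap.isQuotientMap hΦc hΦs).continuous_iff]
  exact (funext hψΦ : ⇑ψ ∘ Φ = χ) ▸ hχ

theorem MonoidHom.map_ker_eq_top_of_zpow_ne_prod_zpow {G ι : Type*} [Group G]
    [TopologicalSpace G] [CompactSpace G] [Fintype ι] {Φ : G →* (ι → Circle)}
    (hΦc : Continuous Φ) (hΦs : Surjective Φ) {χ : G →* Circle} (hχ : Continuous χ)
    (hrel : ∀ (d : ℤ) (m : ι → ℤ), (∀ g, χ g ^ d = ∏ i, Φ g i ^ m i) → d = 0) :
    Φ.ker.map χ = ⊤ := by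
  classical
  by_contra hne
  have hclosed : IsClosed (Φ.ker.map χ : Set Circle) :=
    ((isClosed_singleton.preimage hΦc).isCompact.image hχ).isClosed
  obtain ⟨d, hd0, hd⟩ := Circle.exists_zpow_eq_one_of_isClosed_of_ne_top _ hclosed hne
  obtain ⟨ψ, hψc, hψ⟩ := exists_continuous_comp_eq_of_ker_le hΦc hΦs
    (χ := (zpowGroupHom d).comp χ) ((continuous_zpow d).comp hχ) (fun g hg => hd _ ⟨g, hg, rfl⟩)
  obtain ⟨m, hm⟩ := ψ.exists_eq_prod_zpow_of_continuous hψc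
  exact hd0 (hrel d m fun g => (hψ g).symm.trans (hm (Φ g)))

namespace PontryaginDual

theorem prod_zpow_apply {G ι : Type*} [Monoid G] [TopologicalSpace G]
    (x : ι → PontryaginDual G) (s : Finset ι) (c : ι → ℤ) (g : G) : (∏ i ∈ s, x i ^ c i) g = ∏ i ∈ s, x i g ^ c i :=
  let ev : PontryaginDual G →* Circle := ⟨⟨fun χ => χ g, rfl⟩, fun _ _ => rfl⟩
  (map_prod ev _ s).trans (Finset.prod_congr rfl fun i _ => map_zpow ev (x i) (c i))

theorem exists_forall_mem_apply_eq {G ι : Type*} [Group G] [TopologicalSpace G] [CompactSpace G]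
    {x : ι → PontryaginDual G}
    (hx : LinearIndependent ℤ (fun i => Additive.ofMul (x i))) (s : Finset ι) (w : ι → Circle) :
    ∃ g, ∀ i ∈ s, x i g = w i := by
  classical
  induction s using Finset.induction_on generalizing w with
  | empty => exact ⟨1, by simp⟩
  | @insert j s hj ih =>
    let Φ : G →* (s → Circle) := MonoidHom.pi fun i => (x i : G →* Circle)
    have hΦs : Surjective Φ := fun v => by
      obtain ⟨g, hg⟩ := ih fun i => if h : i ∈ s then v ⟨i, h⟩ else 1
      exact ⟨g, funext fun i => (hg i i.2).trans (dif_pos i.2)⟩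
    have hmap : Φ.ker.map (x j : G →* Circle) = ⊤ := by
      refine MonoidHom.map_ker_eq_top_of_zpow_ne_prod_zpow
        (continuous_pi fun i => map_continuous (x i.1)) hΦs (map_continuous (x j)) fun d m hdm => ?_
      let c : ι → ℤ := fun i => if h : i ∈ s then -m ⟨i, h⟩ else d
      have hcj : c j = d := dif_neg hj
      have hprod : ∏ i ∈ insert j s, x i ^ c i = 1 := ext fun g => by
        have hdm' : x j g ^ d = ∏ i : s, x i g ^ m i := hdm g
        have hs : ∏ i : s, x i g ^ c i = (∏ i : s, x i g ^ m i)⁻¹ := by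
          rw [← Finset.prod_inv_distrib]
          exact Finset.prod_congr rfl fun i _ => by
            rw [show c i = -m i from dif_pos i.2, zpow_neg]
        rw [prod_zpow_apply, Finset.prod_insert hj, hcj, ← Finset.prod_coe_sort s, hs, ← hdm',
          mul_inv_cancel, one_apply]
      refine hcj ▸ linearIndependent_iff'.1 hx (insert j s) c ?_ j (Finset.mem_insert_self j s)
      simpa [← ofMul_zpow, ← ofMul_prod] using hprod
    obtain ⟨g₀, hg₀⟩ := ih w
    obtain ⟨n, hn, hxn⟩ : w j * (x j g₀)⁻¹ ∈ Φ.ker.map (x j : G →* Circle) := hmap ▸ trivial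
    refine ⟨g₀ * n, fun i hi => ?_⟩
    rcases Finset.mem_insert.1 hi with rfl | hi
    · rw [_root_.map_mul, show x i n = _ from hxn, mul_comm, inv_mul_cancel_right]
    · have hxn : x i n = 1 := congr_fun hn ⟨i, hi⟩
      rw [_root_.map_mul, hxn, mul_one, hg₀ i hi]

end PontryaginDual

theorem CompactSpace.exists_forall_apply_eq_of_forall_finset {X ι : Type*} [TopologicalSpace X]
    [CompactSpace X] {Y : ι → Type*} [∀ i, TopologicalSpace (Y i)] [∀ i, T1Space (Y i)]
    {f : X → ∀ i, Y i} (hf : ∀ i, Continuous fun x => f x i) (y : ∀ i, Y i)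
    (h : ∀ s : Finset ι, ∃ x, ∀ i ∈ s, f x i = y i) : ∃ x, f x = y := by
  obtain ⟨x, hx⟩ := CompactSpace.iInter_nonempty (t := fun i => {x | f x i = y i})
    (fun i => isClosed_singleton.preimage (hf i)) fun s => by simpa using h s
  exact ⟨x, funext (Set.mem_iInter.1 hx)⟩

theorem stmt_19_general {G : Type*} [CommGroup G] [TopologicalSpace G] [IsTopologicalGroup G]
    [CompactSpace G]
    (x : ℕ → PontryaginDual G)
    (hord : ∀ i, ∀ m : ℤ, m ≠ 0 → x i ^ m ≠ 1)
    (hindep : ∀ (s : Finset ℕ) (c : ℕ → ℤ),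
      (∏ i ∈ s, x i ^ c i) = 1 → ∀ i ∈ s, x i ^ c i = 1) :
    ∃ f : G →* (ℕ → Circle), Continuous f ∧ Function.Surjective f ∧ IsOpenMap f := by
  have hx : LinearIndependent ℤ (fun i => Additive.ofMul (x i)) :=
    linearIndependent_iff'.2 fun s c hc i hi => by
      by_contra hci
      refine hord i (c i) hci (hindep s c ?_ i hi)
      simpa [← ofMul_zpow, ← ofMul_prod] using hc
  let f : G →* (ℕ → Circle) := MonoidHom.pi fun i => (x i : G →* Circle)
  have hfc : Continuous f := continuous_pi fun i => map_continuous (x i)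
  have hfs : Surjective f := fun w =>
    CompactSpace.exists_forall_apply_eq_of_forall_finset (fun i => map_continuous (x i)) w
      fun s => PontryaginDual.exists_forall_mem_apply_eq hx s w
  have hfq : Topology.IsQuotientMap f := hfc.isClosedMap.isQuotientMap hfc hfs
  exact ⟨f, hfc, hfs, (MonoidHom.isOpenQuotientMap_of_isQuotientMap hfq).isOpenMap⟩

/-- Every non-separable compact Hausdorff abelian topological group `G` whose Pontryagin
dual has infinite torsion-free rank (there is an infinite independent family of elements
of infinite order in the dual) admits the infinite torus `𝕋^ω` as a quotient group. -/
theorem stmt_19 {G : Type*} [CommGroup G] [TopologicalSpace G] [IsTopologicalGroup G]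
    [CompactSpace G] [T2Space G]
    (hns : ¬ TopologicalSpace.SeparableSpace G)
    (x : ℕ → PontryaginDual G)
    (hord : ∀ i, ∀ m : ℤ, m ≠ 0 → x i ^ m ≠ 1)
    (hindep : ∀ (s : Finset ℕ) (c : ℕ → ℤ),
      (∏ i ∈ s, x i ^ c i) = 1 → ∀ i ∈ s, x i ^ c i = 1) :
    ∃ f : G →* (ℕ → Circle), Continuous f ∧ Function.Surjective f ∧ IsOpenMap f :=
  stmt_19_general x hord hindep
end
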